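/- If X₁ and X₂ are i.i.d. Weibull with shape α and scale β, then E[H₂(X₁,X₂)] = log β, where H₂(x₁,x₂) = (log x₁ + log x₂)/2 − ψ(1)·H₁(x₁,x₂) and H₁(x₁,x₂) = (log x₁ + log x₂)/(2 log 2) − log(min{x₁,x₂})/log 2. That is, H₂ is an unbiased symmetric kernel for log β. -/

import Mathlib

open MeasureTheory ProbabilityTheory Real

/-- CDF of the Weibull distribution with shape `α` and scale `β`. -/
noncomputable def weibullCDF (α β x : ℝ) : ℝ :=
  if x ≤ 0 then 0 else 1 - Real.exp (-(x / β) ^ α)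

/-- `X` is Weibull(α, β)-distributed under `μ`. -/
def IsWeibull {Ω : Type*} [MeasurableSpace Ω] (μ : Measure Ω) (X : Ω → ℝ)
    (α β : ℝ) : Prop :=
  ∀ x : ℝ, μ {ω | X ω ≤ x} = ENNReal.ofReal (weibullCDF α β x)

/-!
If `X` is Weibull(α, β) then `(X / β) ^ α` is standard exponential, so
`E[log X] = log β + ψ(1) / α`, where `ψ(1) = Γ'(1) = ∫₀^∞ log t · e^{-t} dt = -γ`.
The survival function of `min X₁ X₂` is the square of that of `X₁`, so the minimum is
Weibull(α, β · 2^{-1/α}) and `E[log min X₁ X₂] = E[log X₁] - log 2 / α`. Hence `E[H₁] = 1 / α`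
and `E[H₂] = E[log X₁] - ψ(1) / α = log β`.
-/

open Set

lemma abs_log_le_two_mul_rpow_neg_half_add_self {t : ℝ} (ht : 0 < t) :
    |log t| ≤ 2 * t ^ (-(1 / 2) : ℝ) + t := by
  have hr : 0 < t ^ (-(1 / 2) : ℝ) := rpow_pos_of_pos ht _
  rcases le_or_gt 1 t with h1 | h1
  · rw [abs_of_nonneg (log_nonneg h1)]
    linarith [log_le_sub_one_of_pos ht]
  · have h := log_le_sub_one_of_pos hr
    rw [log_rpow ht] at h
    rw [abs_of_neg (log_neg ht h1)]
    linarith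

lemma integrableOn_log_mul_exp_neg :
    IntegrableOn (fun t ↦ log t * exp (-t)) (Ioi 0) := by
  have hbound : IntegrableOn (fun t ↦ exp (-t) * t ^ ((1 / 2 : ℝ) - 1) * 2
      + exp (-t) * t ^ ((2 : ℝ) - 1)) (Ioi 0) :=
    ((GammaIntegral_convergent one_half_pos).mul_const 2).add (GammaIntegral_convergent two_pos)
  refine hbound.mono' (by fun_prop) ?_
  filter_upwards [ae_restrict_mem measurableSet_Ioi] with t (ht : 0 < t)
  calc ‖log t * exp (-t)‖ = |log t| * exp (-t) := by
        rw [norm_mul, norm_eq_abs, norm_of_nonneg (exp_pos _).le]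
    _ ≤ (2 * t ^ (-(1 / 2) : ℝ) + t) * exp (-t) :=
        mul_le_mul_of_nonneg_right (abs_log_le_two_mul_rpow_neg_half_add_self ht) (exp_pos _).le
    _ = _ := by norm_num; ring

lemma integral_log_mul_exp_neg :
    ∫ t in Ioi 0, log t * exp (-t) = -eulerMascheroniConstant := by
  have hGamma : Complex.GammaIntegral =ᶠ[nhds 1] Complex.Gamma := by
    filter_upwards [(isOpen_lt continuous_const Complex.continuous_re).mem_nhds
      (by norm_num : (0 : ℝ) < (1 : ℂ).re)] with s hs
    exact (Complex.Gamma_eq_integral hs).symm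
  have h := (Complex.hasDerivAt_GammaIntegral (s := 1) (by norm_num)).unique
    (Complex.hasDerivAt_Gamma_one.congr_of_eventuallyEq hGamma)
  simp only [sub_self, Complex.cpow_zero, one_mul] at h
  apply Complex.ofReal_injective
  rw [← integral_complex_ofReal, Complex.ofReal_neg, ← h]
  simp only [Complex.ofReal_mul]

lemma expMeasure_one_eq_withDensity :
    expMeasure 1 = (volume.restrict (Ioi 0)).withDensity fun t ↦ ENNReal.ofReal (exp (-t)) := by
  rw [expMeasure, gammaMeasure, ← withDensity_indicator measurableSet_Ioi]
  refine withDensity_congr_ae ?_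
  filter_upwards [Measure.ae_ne volume 0] with t ht
  rcases ht.lt_or_gt with ht | ht
  · simp [gammaPDF_eq, ht.not_ge, ht.not_gt]
  · simp [gammaPDF_eq, ht.le, ht]

lemma integrable_log_expMeasure_one : Integrable log (expMeasure 1) := by
  rw [expMeasure_one_eq_withDensity,
    integrable_withDensity_iff (by fun_prop) (ae_of_all _ fun _ ↦ ENNReal.ofReal_lt_top)]
  simp only [ENNReal.toReal_ofReal (exp_pos _).le]
  exact integrableOn_log_mul_exp_neg

lemma integral_log_expMeasure_one : ∫ t, log t ∂expMeasure 1 = -eulerMascheroniConstant := by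
  rw [expMeasure_one_eq_withDensity, integral_withDensity_eq_integral_toReal_smul (by fun_prop)
    (ae_of_all _ fun _ ↦ ENNReal.ofReal_lt_top), ← integral_log_mul_exp_neg]
  simp only [ENNReal.toReal_ofReal (exp_pos _).le, smul_eq_mul, mul_comm]

lemma weibullCDF_of_nonneg {α β x : ℝ} (hα : α ≠ 0) (hx : 0 ≤ x) :
    weibullCDF α β x = 1 - exp (-(x / β) ^ α) := by
  rcases hx.eq_or_lt with rfl | hx
  · simp [weibullCDF, zero_rpow hα]
  · simp [weibullCDF, hx.not_ge]

section

variable {Ω : Type*} [MeasurableSpace Ω] {μ : Measure Ω} {α β : ℝ}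

namespace IsWeibull

variable {X : Ω → ℝ}

lemma measure_nonpos (hX : IsWeibull μ X α β) : μ {ω | X ω ≤ 0} = 0 := by
  simp [hX 0, weibullCDF]

lemma ae_pos (hX : IsWeibull μ X α β) : ∀ᵐ ω ∂μ, 0 < X ω := by
  simpa [ae_iff] using hX.measure_nonpos

lemma map_div_rpow_eq_expMeasure [IsProbabilityMeasure μ] (hα : 0 < α) (hβ : 0 < β)
    (hm : Measurable X) (hX : IsWeibull μ X α β) :
    μ.map (fun ω ↦ (X ω / β) ^ α) = expMeasure 1 := by
  have := isProbabilityMeasure_expMeasure one_pos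
  have := Measure.isProbabilityMeasure_map (μ := μ) (f := fun ω ↦ (X ω / β) ^ α) (by fun_prop)
  refine Measure.ext_of_Iic _ _ fun t ↦ ?_
  rw [Measure.map_apply (by fun_prop) measurableSet_Iic, ← ofReal_cdf, cdf_expMeasure_eq one_pos]
  split_ifs with ht
  · have hset : (fun ω ↦ (X ω / β) ^ α) ⁻¹' Iic t =ᵐ[μ] {ω | X ω ≤ β * t ^ α⁻¹} := by
      refine Filter.eventuallyEq_set.mpr (hX.ae_pos.mono fun ω hω ↦ ?_)
      show (X ω / β) ^ α ≤ t ↔ X ω ≤ β * t ^ α⁻¹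
      rw [← le_rpow_inv_iff_of_pos (div_pos hω hβ).le ht hα, div_le_iff₀' hβ]
    rw [measure_congr hset, hX, weibullCDF_of_nonneg hα.ne' (by positivity),
      mul_div_cancel_left₀ _ hβ.ne', ← rpow_mul ht, inv_mul_cancel₀ hα.ne', rpow_one, one_mul]
  · rw [ENNReal.ofReal_zero]
    refine measure_mono_null (fun ω (hω : (X ω / β) ^ α ≤ t) ↦ ?_) hX.measure_nonpos
    exact le_of_not_gt fun hpos ↦ ht ((rpow_pos_of_pos (div_pos hpos hβ) α).le.trans hω)

lemma log_ae_eq (hα : 0 < α) (hβ : 0 < β) (hX : IsWeibull μ X α β) :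
    (fun ω ↦ log (X ω)) =ᵐ[μ] fun ω ↦ log β + α⁻¹ * log ((X ω / β) ^ α) := by
  filter_upwards [hX.ae_pos] with ω hω
  rw [log_rpow (div_pos hω hβ), log_div hω.ne' hβ.ne', inv_mul_cancel_left₀ hα.ne']
  ring

lemma integrable_log_div_rpow [IsProbabilityMeasure μ] (hα : 0 < α) (hβ : 0 < β)
    (hm : Measurable X) (hX : IsWeibull μ X α β) :
    Integrable (fun ω ↦ log ((X ω / β) ^ α)) μ := by
  refine (integrable_map_measure (g := log) (by fun_prop) (by fun_prop)).mp ?_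
  rw [hX.map_div_rpow_eq_expMeasure hα hβ hm]
  exact integrable_log_expMeasure_one

lemma integral_log_div_rpow [IsProbabilityMeasure μ] (hα : 0 < α) (hβ : 0 < β)
    (hm : Measurable X) (hX : IsWeibull μ X α β) :
    ∫ ω, log ((X ω / β) ^ α) ∂μ = -eulerMascheroniConstant := by
  rw [← integral_map (f := log) (by fun_prop) (by fun_prop), hX.map_div_rpow_eq_expMeasure hα hβ hm]
  exact integral_log_expMeasure_one

lemma integrable_log [IsProbabilityMeasure μ] (hα : 0 < α) (hβ : 0 < β) (hm : Measurable X)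
    (hX : IsWeibull μ X α β) : Integrable (fun ω ↦ log (X ω)) μ :=
  ((integrable_const _).add ((hX.integrable_log_div_rpow hα hβ hm).const_mul _)).congr
    (hX.log_ae_eq hα hβ).symm

lemma integral_log [IsProbabilityMeasure μ] (hα : 0 < α) (hβ : 0 < β) (hm : Measurable X)
    (hX : IsWeibull μ X α β) :
    ∫ ω, log (X ω) ∂μ = log β - eulerMascheroniConstant / α := by
  rw [integral_congr_ae (hX.log_ae_eq hα hβ), integral_add (integrable_const _)
    ((hX.integrable_log_div_rpow hα hβ hm).const_mul _), integral_const_mul,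
    hX.integral_log_div_rpow hα hβ hm, integral_const, probReal_univ, one_smul]
  ring

lemma measure_preimage_Ioi [IsProbabilityMeasure μ] (hα : α ≠ 0) (hβ : 0 < β) (hm : Measurable X)
    (hX : IsWeibull μ X α β) {x : ℝ} (hx : 0 ≤ x) :
    μ (X ⁻¹' Ioi x) = ENNReal.ofReal (exp (-(x / β) ^ α)) := by
  have hcompl : X ⁻¹' Ioi x = {ω | X ω ≤ x}ᶜ := by ext; simp
  have hexp : exp (-(x / β) ^ α) ≤ 1 :=
    exp_le_one_iff.mpr (neg_nonpos.mpr (rpow_nonneg (div_nonneg hx hβ.le) α))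
  rw [hcompl, prob_compl_eq_one_sub (measurableSet_le hm measurable_const), hX,
    weibullCDF_of_nonneg hα hx, ← ENNReal.ofReal_one, ← ENNReal.ofReal_sub _ (by linarith),
    sub_sub_cancel]

end IsWeibull

lemma isWeibull_min {X₁ X₂ : Ω → ℝ} [IsProbabilityMeasure μ] (hα : 0 < α) (hβ : 0 < β)
    (hm₁ : Measurable X₁) (hm₂ : Measurable X₂) (hX₁ : IsWeibull μ X₁ α β)
    (hX₂ : IsWeibull μ X₂ α β) (hindep : IndepFun X₁ X₂ μ) :
    IsWeibull μ (fun ω ↦ min (X₁ ω) (X₂ ω)) α (β * 2 ^ (-α⁻¹)) := by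
  intro x
  rcases le_or_gt x 0 with hx | hx
  · rw [weibullCDF, if_pos hx, ENNReal.ofReal_zero]
    refine measure_mono_null (fun ω (hω : min (X₁ ω) (X₂ ω) ≤ x) ↦ ?_)
      (measure_union_null hX₁.measure_nonpos hX₂.measure_nonpos)
    exact (min_le_iff.mp hω).imp (·.trans hx) (·.trans hx)
  · have hset : {ω | min (X₁ ω) (X₂ ω) ≤ x} = (X₁ ⁻¹' Ioi x ∩ X₂ ⁻¹' Ioi x)ᶜ := by
      ext; simp [or_iff_not_imp_left]
    have hscale : (x / (β * 2 ^ (-α⁻¹))) ^ α = 2 * (x / β) ^ α := by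
      rw [rpow_neg zero_le_two, div_mul_eq_div_div, div_inv_eq_mul,
        mul_rpow (div_pos hx hβ).le (by positivity), ← rpow_mul zero_le_two,
        inv_mul_cancel₀ hα.ne', rpow_one, mul_comm]
    rw [hset, prob_compl_eq_one_sub ((hm₁ measurableSet_Ioi).inter (hm₂ measurableSet_Ioi)),
      hindep.measure_inter_preimage_eq_mul _ _ measurableSet_Ioi measurableSet_Ioi,
      hX₁.measure_preimage_Ioi hα.ne' hβ hm₁ hx.le, hX₂.measure_preimage_Ioi hα.ne' hβ hm₂ hx.le,
      ← ENNReal.ofReal_mul (exp_pos _).le, ← exp_add, weibullCDF_of_nonneg hα.ne' hx.le, hscale,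
      ← ENNReal.ofReal_one, ← ENNReal.ofReal_sub _ (exp_pos _).le]
    congr 3
    ring

end

theorem weibull_kernel_H2_unbiased {Ω : Type*} [MeasurableSpace Ω] (μ : Measure Ω)
    [IsProbabilityMeasure μ] (X₁ X₂ : Ω → ℝ) (α β : ℝ) (hα : 0 < α) (hβ : 0 < β)
    (hm₁ : Measurable X₁) (hm₂ : Measurable X₂)
    (hX₁ : IsWeibull μ X₁ α β) (hX₂ : IsWeibull μ X₂ α β)
    (hindep : IndepFun X₁ X₂ μ) :
    ∫ ω, ((Real.log (X₁ ω) + Real.log (X₂ ω)) / 2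
        - (-Real.eulerMascheroniConstant)
          * ((Real.log (X₁ ω) + Real.log (X₂ ω)) / (2 * Real.log 2)
            - Real.log (min (X₁ ω) (X₂ ω)) / Real.log 2)) ∂μ
      = Real.log β := by
  have hmin := isWeibull_min hα hβ hm₁ hm₂ hX₁ hX₂ hindep
  have hβ' : 0 < β * 2 ^ (-α⁻¹) := by positivity
  have hi₁ := hX₁.integrable_log hα hβ hm₁
  have hi₂ := hX₂.integrable_log hα hβ hm₂
  have hi := hmin.integrable_log hα hβ' (hm₁.min hm₂)
  rw [integral_sub (by fun_prop) (by fun_prop), integral_const_mul,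
    integral_sub (by fun_prop) (by fun_prop), integral_div, integral_div, integral_div,
    integral_add hi₁ hi₂, hX₁.integral_log hα hβ hm₁, hX₂.integral_log hα hβ hm₂,
    hmin.integral_log hα hβ' (hm₁.min hm₂), log_mul hβ.ne' (by positivity), log_rpow two_pos]
  field_simp
  ring
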